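/- arXiv:2503.17629 — 4 statements merged into one kernel-verified Lean document; each statement's English description precedes it below -/
import Mathlib

section
/- Let ℓ satisfy the bounded-slope condition 0 < ε₁ ≤ (ℓ(x)−ℓ(y))/(x−y) ≤ L₁ and ℓ(0)=0, and let SR be the associated shortfall risk on a finite probability space (Ω, P). Then for all v ≥ w pointwise, SR(v) − SR(w) ≥ (ε₁/L₁)·E[v − w]. -/
open Finset

/-- Utility-based shortfall risk under a probability mass function `P` with loss `ℓ`. -/
noncomputable def shortfallRisk {Ω : Type*} [Fintype Ω]
    (P : Ω → ℝ) (ℓ : ℝ → ℝ) (v : Ω → ℝ) : ℝ :=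
  sInf {m : ℝ | ∑ ω, P ω * ℓ (v ω - m) ≤ 0}

lemma slope_bounds {ℓ : ℝ → ℝ} {ε₁ L₁ : ℝ}
    (hslope : ∀ x y : ℝ, x ≠ y → ε₁ ≤ (ℓ x - ℓ y) / (x - y) ∧ (ℓ x - ℓ y) / (x - y) ≤ L₁)
    {a b : ℝ} (h : b ≤ a) :
    ε₁ * (a - b) ≤ ℓ a - ℓ b ∧ ℓ a - ℓ b ≤ L₁ * (a - b) := by
  rcases eq_or_lt_of_le h with rfl | h
  · simp
  · have hab : 0 < a - b := sub_pos.2 h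
    obtain ⟨h1, h2⟩ := hslope a b h.ne'
    exact ⟨(le_div_iff₀ hab).1 h1, by nlinarith [(div_le_iff₀ hab).1 h2]⟩

theorem stmt_6 {Ω : Type*} [Fintype Ω] [Nonempty Ω]
    (P : Ω → ℝ) (hP0 : ∀ ω, 0 ≤ P ω) (hP1 : ∑ ω, P ω = 1)
    (ℓ : ℝ → ℝ) (hℓ0 : ℓ 0 = 0) (hinc : StrictMono ℓ)
    (ε₁ L₁ : ℝ) (hε : 0 < ε₁)
    (hslope : ∀ x y : ℝ, x ≠ y → ε₁ ≤ (ℓ x - ℓ y) / (x - y) ∧ (ℓ x - ℓ y) / (x - y) ≤ L₁)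
    (v w : Ω → ℝ) (hvw : ∀ ω, w ω ≤ v ω) :
    (ε₁ / L₁) * ∑ ω, P ω * (v ω - w ω) ≤
      shortfallRisk P ℓ v - shortfallRisk P ℓ w := by
  have hεL : ε₁ ≤ L₁ := by
    obtain ⟨h1, h2⟩ := hslope 1 0 one_ne_zero
    linarith
  have hL₁ : 0 < L₁ := lt_of_lt_of_le hε hεL
  -- Lipschitz-type bounds for g u m := ∑ ω, P ω * ℓ (u ω - m)
  have key : ∀ (u : Ω → ℝ) (m m' : ℝ), m ≤ m' →
      ε₁ * (m' - m) ≤ (∑ ω, P ω * ℓ (u ω - m)) - (∑ ω, P ω * ℓ (u ω - m')) ∧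
      (∑ ω, P ω * ℓ (u ω - m)) - (∑ ω, P ω * ℓ (u ω - m')) ≤ L₁ * (m' - m) := by
    intro u m m' hmm
    have hd : (∑ ω, P ω * ℓ (u ω - m)) - (∑ ω, P ω * ℓ (u ω - m'))
        = ∑ ω, P ω * (ℓ (u ω - m) - ℓ (u ω - m')) := by
      rw [← Finset.sum_sub_distrib]
      exact Finset.sum_congr rfl fun ω _ => (mul_sub _ _ _).symm
    have hsb : ∀ ω : Ω, ε₁ * (m' - m) ≤ ℓ (u ω - m) - ℓ (u ω - m') ∧
        ℓ (u ω - m) - ℓ (u ω - m') ≤ L₁ * (m' - m) := by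
      intro ω
      have := slope_bounds hslope (a := u ω - m) (b := u ω - m') (by linarith)
      constructor <;> [nlinarith [this.1]; nlinarith [this.2]]
    constructor
    · rw [hd]
      calc ε₁ * (m' - m) = ∑ ω, P ω * (ε₁ * (m' - m)) := by
            rw [← Finset.sum_mul, hP1, one_mul]
        _ ≤ ∑ ω, P ω * (ℓ (u ω - m) - ℓ (u ω - m')) :=
            Finset.sum_le_sum fun ω _ => mul_le_mul_of_nonneg_left (hsb ω).1 (hP0 ω)
    · rw [hd]
      calc ∑ ω, P ω * (ℓ (u ω - m) - ℓ (u ω - m'))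
          ≤ ∑ ω, P ω * (L₁ * (m' - m)) :=
            Finset.sum_le_sum fun ω _ => mul_le_mul_of_nonneg_left (hsb ω).2 (hP0 ω)
        _ = L₁ * (m' - m) := by rw [← Finset.sum_mul, hP1, one_mul]
  -- ℓ is continuous
  have hℓcont : Continuous ℓ := by
    have : LipschitzWith (Real.toNNReal L₁) ℓ := by
      apply LipschitzWith.of_dist_le_mul
      intro x y
      rw [Real.coe_toNNReal _ hL₁.le, Real.dist_eq, Real.dist_eq]
      rcases le_total y x with h | h
      · obtain ⟨h1, h2⟩ := slope_bounds hslope h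
        rw [abs_of_nonneg (by nlinarith), abs_of_nonneg (by linarith)]
        linarith
      · obtain ⟨h1, h2⟩ := slope_bounds hslope h
        rw [abs_of_nonpos (by nlinarith), abs_of_nonpos (by linarith)]
        linarith
    exact this.continuous
  -- characterization of shortfallRisk as the root
  have hroot : ∀ (u : Ω → ℝ) (m₀ : ℝ), (∑ ω, P ω * ℓ (u ω - m₀)) = 0 →
      shortfallRisk P ℓ u = m₀ := by
    intro u m₀ h0
    have hset : {m : ℝ | ∑ ω, P ω * ℓ (u ω - m) ≤ 0} = Set.Ici m₀ := by
      ext m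
      simp only [Set.mem_setOf_eq, Set.mem_Ici]
      constructor
      · intro hm
        by_contra hc
        push_neg at hc
        have := (key u m m₀ hc.le).1
        nlinarith
      · intro hm
        have := (key u m₀ m hm).1
        nlinarith
    rw [shortfallRisk, hset, csInf_Ici]
  -- existence of roots
  have hex : ∀ u : Ω → ℝ, ∃ m₀ : ℝ, (∑ ω, P ω * ℓ (u ω - m₀)) = 0 := by
    intro u
    have hne : (univ : Finset Ω).Nonempty := univ_nonempty
    set a := univ.inf' hne u with ha
    set b := univ.sup' hne u with hb
    have hab : a ≤ b := by
      obtain ⟨ω₀⟩ := ‹Nonempty Ω›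
      exact le_trans (Finset.inf'_le u (mem_univ ω₀)) (Finset.le_sup' u (mem_univ ω₀))
    have hcont : ContinuousOn (fun m => ∑ ω, P ω * ℓ (u ω - m)) (Set.Icc a b) := by
      apply Continuous.continuousOn
      exact continuous_finset_sum _ fun ω _ =>
        continuous_const.mul (hℓcont.comp (continuous_const.sub continuous_id))
    have hfb : (∑ ω, P ω * ℓ (u ω - b)) ≤ 0 := by
      apply Finset.sum_nonpos
      intro ω _
      have h1 : u ω - b ≤ 0 := sub_nonpos.2 (Finset.le_sup' u (mem_univ ω))
      have h2 : ℓ (u ω - b) ≤ 0 := hℓ0 ▸ hinc.monotone h1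
      exact mul_nonpos_of_nonneg_of_nonpos (hP0 ω) h2
    have hfa : 0 ≤ (∑ ω, P ω * ℓ (u ω - a)) := by
      apply Finset.sum_nonneg
      intro ω _
      have h1 : (0:ℝ) ≤ u ω - a := sub_nonneg.2 (Finset.inf'_le u (mem_univ ω))
      have h2 : (0:ℝ) ≤ ℓ (u ω - a) := hℓ0 ▸ hinc.monotone h1
      exact mul_nonneg (hP0 ω) h2
    have := intermediate_value_Icc' hab hcont (Set.mem_Icc.2 ⟨hfb, hfa⟩)
    obtain ⟨m₀, _, hm₀⟩ := this
    exact ⟨m₀, hm₀⟩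
  obtain ⟨mv, hmv⟩ := hex v
  obtain ⟨mw, hmw⟩ := hex w
  rw [hroot v mv hmv, hroot w mw hmw]
  set D := ∑ ω, P ω * (v ω - w ω) with hD
  have hD0 : 0 ≤ D :=
    Finset.sum_nonneg fun ω _ => mul_nonneg (hP0 ω) (sub_nonneg.2 (hvw ω))
  -- g v mw ≥ ε₁ D
  have hgv : ε₁ * D ≤ ∑ ω, P ω * ℓ (v ω - mw) := by
    have h1 : ∑ ω, P ω * (ℓ (w ω - mw) + ε₁ * (v ω - w ω)) ≤ ∑ ω, P ω * ℓ (v ω - mw) := by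
      apply Finset.sum_le_sum
      intro ω _
      have := (slope_bounds hslope (a := v ω - mw) (b := w ω - mw) (by linarith [hvw ω])).1
      apply mul_le_mul_of_nonneg_left _ (hP0 ω)
      nlinarith
    calc ε₁ * D = ∑ ω, P ω * (ℓ (w ω - mw) + ε₁ * (v ω - w ω)) := by
          rw [hD, Finset.mul_sum]
          rw [show (∑ ω, P ω * (ℓ (w ω - mw) + ε₁ * (v ω - w ω)))
              = (∑ ω, P ω * ℓ (w ω - mw)) + ∑ ω, P ω * (ε₁ * (v ω - w ω)) by
            rw [← Finset.sum_add_distrib]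
            exact Finset.sum_congr rfl fun ω _ => by ring]
          rw [hmw, zero_add]
          exact Finset.sum_congr rfl fun ω _ => by ring
      _ ≤ _ := h1
  have hmwv : mw ≤ mv := by
    by_contra hc
    push_neg at hc
    have := (key v mv mw hc.le).1
    nlinarith
  have := (key v mw mv hmwv).2
  rw [div_mul_eq_mul_div, div_le_iff₀ hL₁]
  nlinarith
end

section
/- Let ℓ : ℝ → ℝ satisfy ℓ(0) = 0 and 0 < ε₁ ≤ (ℓ(x)−ℓ(y))/(x−y) ≤ L₁ for all x ≠ y, and assume ℓ is convex. Define ℓ_s(x) := (1/s)·ℓ(sx) for s > 0. Then ℓ_s converges pointwise as s → ∞ to ℓ_∞(x) := L̄·x for x ≥ 0 and ℓ_∞(x) := L_·x for x < 0, where L̄ := lim_{x→∞} ℓ'₊(x) and L_ := lim_{x→−∞} ℓ'₋(x), and the convergence is uniform on compact subsets of ℝ. -/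
open Filter Set Topology

/-!
Since `ℓ 0 = 0`, `ℓ (s x) / s = x · slope ℓ 0 (s x)`, so the pointwise limit is governed by the
asymptotic slopes of `ℓ`. By convexity `t ↦ slope ℓ 0 t` is monotone and bounded by the right
derivative at `t`, hence by `L̄`; conversely the right derivative at `t` is at most
`slope ℓ t (2t) = 2 slope ℓ 0 (2t) - slope ℓ 0 t`, so the slopes tend to `L̄`. The case `t → -∞`
follows by reflecting `ℓ`. Convexity and `ℓ 0 = 0` also make `s ↦ ℓ (s x) / s` nondecreasing, so
Dini's theorem upgrades pointwise to locally uniform convergence.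
-/

theorem derivWithin_Iio_eq_Iic {E : Type*} [NormedAddCommGroup E] [NormedSpace ℝ E] (f : ℝ → E)
    (x : ℝ) : derivWithin f (Iio x) x = derivWithin f (Iic x) x := by
  refine derivWithin_congr_set' x ?_
  filter_upwards [self_mem_nhdsWithin] with y (hy : y ≠ x)
  exact propext ⟨le_of_lt, fun h ↦ lt_of_le_of_ne h hy⟩

lemma slope_two_mul_sub (f : ℝ → ℝ) {a t : ℝ} (h : t ≠ a) :
    slope f t (2 * t - a) = 2 * slope f a (2 * t - a) - slope f a t := by
  have h' : t - a ≠ 0 := sub_ne_zero.mpr h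
  simp only [slope_def_field, show 2 * t - a - a = 2 * (t - a) by ring,
    show 2 * t - a - t = t - a by ring]
  field_simp
  ring

lemma slope_comp_neg (f : ℝ → ℝ) (a t : ℝ) :
    slope (fun x ↦ f (-x)) a t = -slope f (-a) (-t) := by
  simp only [slope_def_field, neg_sub_neg]
  rw [← div_neg, neg_sub]

lemma one_div_mul_map_mul_eq_mul_slope {f : ℝ → ℝ} (hf0 : f 0 = 0) (s x : ℝ) :
    1 / s * f (s * x) = x * slope f 0 (s * x) := by
  rcases eq_or_ne x 0 with rfl | hx
  · simp [hf0]
  rcases eq_or_ne s 0 with rfl | hs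
  · simp [hf0]
  rw [slope_def_field, hf0, sub_zero, sub_zero]
  field_simp

namespace ConvexOn

variable {f : ℝ → ℝ} {L : ℝ}

lemma rightDeriv_le_of_tendsto (hf : ConvexOn ℝ univ f)
    (hL : Tendsto (fun x ↦ derivWithin f (Ioi x) x) atTop (𝓝 L)) (x : ℝ) :
    derivWithin f (Ioi x) x ≤ L := by
  have hmono : Monotone fun x ↦ derivWithin f (Ioi x) x := by
    simpa using hf.monotoneOn_rightDeriv
  exact hmono.ge_of_tendsto hL x

lemma slope_le_rightDeriv (hf : ConvexOn ℝ univ f) {a t : ℝ} (h : a < t) :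
    slope f a t ≤ derivWithin f (Ioi t) t :=
  (hf.slope_le_leftDeriv_of_mem_interior (mem_univ a) (by simp) h).trans
    (hf.leftDeriv_le_rightDeriv_of_mem_interior (by simp))

theorem tendsto_slope_atTop (hf : ConvexOn ℝ univ f)
    (hL : Tendsto (fun x ↦ derivWithin f (Ioi x) x) atTop (𝓝 L)) (a : ℝ) :
    Tendsto (slope f a) atTop (𝓝 L) := by
  have hle : ∀ t, a < t → slope f a t ≤ L := fun t ht ↦
    (hf.slope_le_rightDeriv ht).trans (hf.rightDeriv_le_of_tendsto hL t)
  obtain ⟨M, hM⟩ : ∃ M, Tendsto (slope f a) atTop (𝓝 M) := by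
    have hgt : ∀ t, a < max t (a + 1) := fun t ↦ (lt_add_one a).trans_le (le_max_right _ _)
    have hg : Monotone fun t ↦ slope f a (max t (a + 1)) := fun s t hst ↦
      hf.slope_mono (mem_univ a) ⟨mem_univ _, (hgt s).ne'⟩ ⟨mem_univ _, (hgt t).ne'⟩
        (max_le_max_right _ hst)
    refine ⟨_, (tendsto_atTop_ciSup hg ⟨L, ?_⟩).congr' ?_⟩
    · rintro _ ⟨t, rfl⟩
      exact hle _ (hgt t)
    · filter_upwards [eventually_ge_atTop (a + 1)] with t ht
      rw [max_eq_left ht]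
  have hM_le : M ≤ L := le_of_tendsto hM ((eventually_gt_atTop a).mono hle)
  -- Doubling: the right derivative at `t` is at most the slope over `[t, 2t - a]`.
  have hL_le : L ≤ M := by
    have h2 : Tendsto (fun t ↦ 2 * slope f a (2 * t - a) - slope f a t) atTop (𝓝 (2 * M - M)) :=
      ((hM.comp (tendsto_atTop_add_const_right _ (-a)
        (tendsto_id.const_mul_atTop two_pos))).const_mul 2).sub hM
    rw [two_mul, add_sub_cancel_right] at h2
    refine le_of_tendsto_of_tendsto hL h2 ?_
    filter_upwards [eventually_gt_atTop a] with t ht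
    rw [← slope_two_mul_sub f ht.ne']
    exact hf.rightDeriv_le_slope_of_mem_interior (by simp) (mem_univ _) (by linarith)
  rwa [le_antisymm hM_le hL_le] at hM

theorem tendsto_slope_atBot (hf : ConvexOn ℝ univ f)
    (hL : Tendsto (fun x ↦ derivWithin f (Iio x) x) atBot (𝓝 L)) (a : ℝ) :
    Tendsto (slope f a) atBot (𝓝 L) := by
  have hneg : ConvexOn ℝ univ fun x ↦ f (-x) := by
    refine ⟨convex_univ, fun x _ y _ a b ha hb hab ↦ ?_⟩
    simpa only [smul_eq_mul, mul_neg, neg_add] using hf.2 (mem_univ (-x)) (mem_univ (-y)) ha hb hab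
  have hL' : Tendsto (fun x ↦ derivWithin (fun x ↦ f (-x)) (Ioi x) x) atTop (𝓝 (-L)) := by
    simp only [derivWithin_comp_neg, neg_Ioi]
    exact (hL.comp tendsto_neg_atTop_atBot).neg
  have := (hneg.tendsto_slope_atTop hL' (-a)).neg.comp tendsto_neg_atBot_atTop
  simpa [Function.comp_def, slope_comp_neg] using this

lemma monotoneOn_one_div_mul_map_mul (hf : ConvexOn ℝ univ f) (hf0 : f 0 = 0) (x : ℝ) :
    MonotoneOn (fun s ↦ 1 / s * f (s * x)) (Ioi 0) := by
  intro s (hs : 0 < s) t (ht : 0 < t) hst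
  have hchord : f (s * x) ≤ s / t * f (t * x) := by
    have := hf.2 (mem_univ (t * x)) (mem_univ 0) (div_nonneg hs.le ht.le)
      (sub_nonneg.mpr ((div_le_one ht).mpr hst)) (add_sub_cancel _ _)
    simp only [hf0, smul_eq_mul, mul_zero, add_zero, ← mul_assoc,
      div_mul_cancel₀ _ ht.ne'] at this
    exact this
  calc 1 / s * f (s * x) ≤ 1 / s * (s / t * f (t * x)) := by gcongr
    _ = 1 / t * f (t * x) := by field_simp

lemma continuous_one_div_mul_map_mul (hf : ConvexOn ℝ univ f) (s : ℝ) :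
    Continuous fun x ↦ 1 / s * f (s * x) := by
  have : Continuous f := continuousOn_univ.mp (hf.continuousOn isOpen_univ)
  fun_prop

-- Dini's theorem needs monotonicity in every index, so replace `s` by `max s 1` first.
theorem tendstoUniformlyOn_one_div_mul_map_mul (hf : ConvexOn ℝ univ f) (hf0 : f 0 = 0)
    {g : ℝ → ℝ} (hg : Continuous g)
    (hlim : ∀ x, Tendsto (fun s ↦ 1 / s * f (s * x)) atTop (𝓝 (g x))) {K : Set ℝ}
    (hK : IsCompact K) :
    TendstoUniformlyOn (fun s x ↦ 1 / s * f (s * x)) g atTop K := by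
  have hmax : ∀ᶠ s : ℝ in atTop, max s 1 = s := by
    filter_upwards [eventually_ge_atTop 1] with s hs using max_eq_left hs
  have hpos : ∀ s : ℝ, max s 1 ∈ Ioi 0 := fun s ↦ zero_lt_one.trans_le (le_max_right s 1)
  have hdini : TendstoUniformlyOn (fun s x ↦ 1 / max s 1 * f (max s 1 * x)) g atTop K :=
    Monotone.tendstoUniformlyOn_of_forall_tendsto hK
      (fun s ↦ (hf.continuous_one_div_mul_map_mul _).continuousOn)
      (fun x _ s t hst ↦ hf.monotoneOn_one_div_mul_map_mul hf0 x (hpos s) (hpos t)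
        (max_le_max_right 1 hst))
      hg.continuousOn
      (fun x _ ↦ (hlim x).congr' (hmax.mono fun s hs ↦ by simp only [hs]))
  refine hdini.congr ?_
  filter_upwards [hmax] with s hs x _
  rw [hs]

end ConvexOn

lemma continuous_piecewise_mul (a b : ℝ) :
    Continuous fun x : ℝ ↦ if 0 ≤ x then a * x else b * x :=
  Continuous.if_le (by fun_prop) (by fun_prop) continuous_const continuous_id
    fun x hx ↦ by simp [← hx]

lemma tendsto_one_div_mul_map_mul {f : ℝ → ℝ} (hf0 : f 0 = 0) {Lbar Lund : ℝ}
    (hbar : Tendsto (slope f 0) atTop (𝓝 Lbar)) (hund : Tendsto (slope f 0) atBot (𝓝 Lund))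
    (x : ℝ) :
    Tendsto (fun s ↦ 1 / s * f (s * x)) atTop (𝓝 (if 0 ≤ x then Lbar * x else Lund * x)) := by
  simp only [one_div_mul_map_mul_eq_mul_slope hf0]
  rcases lt_trichotomy x 0 with hx | rfl | hx
  · rw [if_neg hx.not_ge, mul_comm]
    exact (hund.comp (tendsto_id.atTop_mul_const_of_neg hx)).const_mul x
  · simp
  · rw [if_pos hx.le, mul_comm]
    exact (hbar.comp (tendsto_id.atTop_mul_const hx)).const_mul x

theorem stmt_10_general
    (ℓ : ℝ → ℝ) (hℓ0 : ℓ 0 = 0) (hconv : ConvexOn ℝ Set.univ ℓ)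
    (Lbar Lund : ℝ)
    -- L̄ is the limit of the right derivative at +∞
    (hLbar : Tendsto (fun x : ℝ => derivWithin ℓ (Set.Ici x) x) atTop (nhds Lbar))
    -- L_ is the limit of the left derivative at −∞
    (hLund : Tendsto (fun x : ℝ => derivWithin ℓ (Set.Iic x) x) atBot (nhds Lund)) :
    (∀ x : ℝ, Tendsto (fun s : ℝ => (1 / s) * ℓ (s * x)) atTop
      (nhds (if 0 ≤ x then Lbar * x else Lund * x))) ∧
    (∀ K : Set ℝ, IsCompact K →
      TendstoUniformlyOn (fun (s : ℝ) (x : ℝ) => (1 / s) * ℓ (s * x))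
        (fun x => if 0 ≤ x then Lbar * x else Lund * x) atTop K) := by
  simp only [← derivWithin_Ioi_eq_Ici, ← derivWithin_Iio_eq_Iic] at hLbar hLund
  have hpointwise := tendsto_one_div_mul_map_mul hℓ0
    (hconv.tendsto_slope_atTop hLbar 0) (hconv.tendsto_slope_atBot hLund 0)
  exact ⟨hpointwise, fun K hK ↦ hconv.tendstoUniformlyOn_one_div_mul_map_mul hℓ0
    (continuous_piecewise_mul Lbar Lund) hpointwise hK⟩

theorem stmt_10
    (ℓ : ℝ → ℝ) (hℓ0 : ℓ 0 = 0) (hconv : ConvexOn ℝ Set.univ ℓ)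
    (ε₁ L₁ : ℝ) (hε : 0 < ε₁)
    (hslope : ∀ x y : ℝ, x ≠ y → ε₁ ≤ (ℓ x - ℓ y) / (x - y) ∧ (ℓ x - ℓ y) / (x - y) ≤ L₁)
    (Lbar Lund : ℝ)
    -- L̄ is the limit of the right derivative at +∞
    (hLbar : Tendsto (fun x : ℝ => derivWithin ℓ (Set.Ici x) x) atTop (nhds Lbar))
    -- L_ is the limit of the left derivative at −∞
    (hLund : Tendsto (fun x : ℝ => derivWithin ℓ (Set.Iic x) x) atBot (nhds Lund)) :
    (∀ x : ℝ, Tendsto (fun s : ℝ => (1 / s) * ℓ (s * x)) atTop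
      (nhds (if 0 ≤ x then Lbar * x else Lund * x))) ∧
    (∀ K : Set ℝ, IsCompact K →
      TendstoUniformlyOn (fun (s : ℝ) (x : ℝ) => (1 / s) * ℓ (s * x))
        (fun x => if 0 ≤ x then Lbar * x else Lund * x) atTop K) :=
  stmt_10_general ℓ hℓ0 hconv Lbar Lund hLbar hLund
end

section
/- Let OCE(v) := inf_{ξ∈ℝ} {ξ + E[ℓ(v − ξ)]} for a loss function ℓ with slopes in [ε₁, L₁], ε₁ > 0, ℓ(0)=0, on a finite probability space. Then for all v ≥ w pointwise, OCE(v) − OCE(w) ≥ ε₁·E[v − w]. -/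
/-! Evaluate both objectives at a minimiser `ξ` of the one for `v`: then `OCE v - OCE w` is at
least `E[ℓ(v - ξ) - ℓ(w - ξ)]`, and the lower slope bound gives `ℓ(v - ξ) - ℓ(w - ξ) ≥ ε₁ (v - w)`
pointwise. -/

open Finset

lemma mul_sub_le_sub_of_le_slope {f : ℝ → ℝ} {ε : ℝ}
    (hslope : ∀ x y : ℝ, x ≠ y → ε ≤ (f x - f y) / (x - y)) {a b : ℝ} (hba : b ≤ a) :
    ε * (a - b) ≤ f a - f b := by
  rcases hba.eq_or_lt with rfl | hlt
  · simp
  · exact (le_div_iff₀ (sub_pos.2 hlt)).1 (hslope a b hlt.ne')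

lemma mul_sum_sub_le_sum_sub_of_le_slope {Ω : Type*} [Fintype Ω] {P : Ω → ℝ}
    (hP0 : ∀ ω, 0 ≤ P ω) {f : ℝ → ℝ} {ε : ℝ}
    (hslope : ∀ x y : ℝ, x ≠ y → ε ≤ (f x - f y) / (x - y))
    {v w : Ω → ℝ} (hvw : ∀ ω, w ω ≤ v ω) (ξ : ℝ) :
    ε * ∑ ω, P ω * (v ω - w ω) ≤ ∑ ω, P ω * f (v ω - ξ) - ∑ ω, P ω * f (w ω - ξ) := by
  rw [mul_sum, ← sum_sub_distrib]
  refine sum_le_sum fun ω _ => ?_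
  have hpoint := mul_sub_le_sub_of_le_slope hslope (sub_le_sub_right (hvw ω) ξ)
  rw [sub_sub_sub_cancel_right] at hpoint
  nlinarith [hP0 ω]

theorem stmt_13_general {Ω : Type*} [Fintype Ω]
    (P : Ω → ℝ) (hP0 : ∀ ω, 0 ≤ P ω)
    (ℓ : ℝ → ℝ)
    (ε₁ L₁ : ℝ)
    (hslope : ∀ x y : ℝ, x ≠ y → ε₁ ≤ (ℓ x - ℓ y) / (x - y) ∧ (ℓ x - ℓ y) / (x - y) ≤ L₁)
    (OCE : (Ω → ℝ) → ℝ)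
    -- OCE u is the infimum of ξ ↦ ξ + E[ℓ(u − ξ)]
    (hOCE : ∀ u : Ω → ℝ,
      IsGLB (Set.range fun ξ : ℝ => ξ + ∑ ω, P ω * ℓ (u ω - ξ)) (OCE u))
    -- the infimum is attained
    (hatt : ∀ u : Ω → ℝ, ∃ ξ : ℝ, OCE u = ξ + ∑ ω, P ω * ℓ (u ω - ξ))
    (v w : Ω → ℝ) (hvw : ∀ ω, w ω ≤ v ω) :
    ε₁ * ∑ ω, P ω * (v ω - w ω) ≤ OCE v - OCE w := by
  obtain ⟨ξ, hv⟩ := hatt v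
  have hw : OCE w ≤ ξ + ∑ ω, P ω * ℓ (w ω - ξ) := (hOCE w).1 ⟨ξ, rfl⟩
  have hgap := mul_sum_sub_le_sum_sub_of_le_slope hP0 (fun x y hxy => (hslope x y hxy).1) hvw ξ
  linarith

theorem stmt_13 {Ω : Type*} [Fintype Ω] [Nonempty Ω]
    (P : Ω → ℝ) (hP0 : ∀ ω, 0 ≤ P ω) (hP1 : ∑ ω, P ω = 1)
    (ℓ : ℝ → ℝ) (hℓ0 : ℓ 0 = 0) (hmono : Monotone ℓ)
    (ε₁ L₁ : ℝ) (hε : 0 < ε₁)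
    (hslope : ∀ x y : ℝ, x ≠ y → ε₁ ≤ (ℓ x - ℓ y) / (x - y) ∧ (ℓ x - ℓ y) / (x - y) ≤ L₁)
    (OCE : (Ω → ℝ) → ℝ)
    -- OCE u is the infimum of ξ ↦ ξ + E[ℓ(u − ξ)]
    (hOCE : ∀ u : Ω → ℝ,
      IsGLB (Set.range fun ξ : ℝ => ξ + ∑ ω, P ω * ℓ (u ω - ξ)) (OCE u))
    -- the infimum is attained
    (hatt : ∀ u : Ω → ℝ, ∃ ξ : ℝ, OCE u = ξ + ∑ ω, P ω * ℓ (u ω - ξ))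
    (v w : Ω → ℝ) (hvw : ∀ ω, w ω ≤ v ω) :
    ε₁ * ∑ ω, P ω * (v ω - w ω) ≤ OCE v - OCE w :=
  stmt_13_general P hP0 ℓ ε₁ L₁ hslope OCE hOCE hatt v w hvw
end

section
/- Suppose the Bellman-type operator 𝓗 on ℝ^𝒦 (𝒦 finite) is non-expansive in sup-norm and span-seminorm contractive with factor ᾱ < 1, with span fixed point q* and constant g* such that 𝓗(q*) = q* + g*·e. Then for any q, ‖𝓗^{n+1}(q) − 𝓗ⁿ(q) − g*·e‖_∞ ≤ ‖𝓗ⁿ(q) − q*‖_sp, and hence 𝓗^{n+1}(q) − 𝓗ⁿ(q) → g*·e as n → ∞. -/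
open Finset Filter

noncomputable def spanSeminorm {K : Type*} [Fintype K] [Nonempty K] (v : K → ℝ) : ℝ :=
  (univ.sup' univ_nonempty v) - (univ.inf' univ_nonempty v)

noncomputable def supNorm {K : Type*} [Fintype K] [Nonempty K] (v : K → ℝ) : ℝ :=
  univ.sup' univ_nonempty (fun k => |v k|)

lemma supNorm_le' {K : Type*} [Fintype K] [Nonempty K] {v : K → ℝ} {c : ℝ}
    (h : ∀ k, |v k| ≤ c) : supNorm v ≤ c :=
  Finset.sup'_le _ _ fun k _ => h k

lemma le_supNorm' {K : Type*} [Fintype K] [Nonempty K] (v : K → ℝ) (k : K) :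
    |v k| ≤ supNorm v :=
  Finset.le_sup' (fun k => |v k|) (mem_univ k)

lemma supNorm_nonneg' {K : Type*} [Fintype K] [Nonempty K] (v : K → ℝ) :
    0 ≤ supNorm v :=
  (abs_nonneg _).trans (le_supNorm' v (Classical.arbitrary K))

lemma spanSeminorm_nonneg' {K : Type*} [Fintype K] [Nonempty K] (v : K → ℝ) :
    0 ≤ spanSeminorm v := by
  have k := Classical.arbitrary K
  have h1 : univ.inf' univ_nonempty v ≤ v k := Finset.inf'_le _ (mem_univ k)
  have h2 : v k ≤ univ.sup' univ_nonempty v := Finset.le_sup' _ (mem_univ k)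
  unfold spanSeminorm; linarith

lemma spanSeminorm_add_const {K : Type*} [Fintype K] [Nonempty K] (v : K → ℝ) (c : ℝ) :
    spanSeminorm (fun k => v k + c) = spanSeminorm v := by
  have hs : univ.sup' (univ_nonempty (α := K)) (fun k => v k + c)
      = univ.sup' univ_nonempty v + c := by
    apply le_antisymm
    · exact Finset.sup'_le _ _ fun k _ => by
        have := Finset.le_sup' v (mem_univ k); linarith
    · have : ∀ k ∈ (univ : Finset K), v k ≤ univ.sup' univ_nonempty (fun k => v k + c) - c := by
        intro k _
        have h : v k + c ≤ univ.sup' univ_nonempty (fun j => v j + c) :=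
          Finset.le_sup' (fun j => v j + c) (mem_univ k)
        linarith
      have := Finset.sup'_le univ_nonempty _ this; linarith
  have hi : univ.inf' (univ_nonempty (α := K)) (fun k => v k + c)
      = univ.inf' univ_nonempty v + c := by
    apply le_antisymm
    · have : ∀ k ∈ (univ : Finset K),
          univ.inf' (univ_nonempty (α := K)) (fun k => v k + c) - c ≤ v k := by
        intro k _
        have h : univ.inf' univ_nonempty (fun j => v j + c) ≤ v k + c :=
          Finset.inf'_le (fun j => v j + c) (mem_univ k)
        linarith
      have := Finset.le_inf' univ_nonempty _ this; linarith
    · exact Finset.le_inf' _ _ fun k _ => by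
        have := Finset.inf'_le v (mem_univ k); linarith
  unfold spanSeminorm; rw [hs, hi]; ring

theorem stmt_15 {K : Type*} [Fintype K] [Nonempty K]
    (H : (K → ℝ) → (K → ℝ)) (αbar : ℝ) (hα0 : 0 ≤ αbar) (hα1 : αbar < 1)
    (hnonexp : ∀ p q : K → ℝ, supNorm (H p - H q) ≤ supNorm (p - q))
    (hspan : ∀ p q : K → ℝ, spanSeminorm (H p - H q) ≤ αbar * spanSeminorm (p - q))
    (htrans : ∀ (q : K → ℝ) (lam : ℝ), H (fun k => q k + lam) = fun k => H q k + lam)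
    (qstar : K → ℝ) (gstar : ℝ) (hfix : H qstar = fun k => qstar k + gstar) :
    ∀ q : K → ℝ,
      (∀ n : ℕ, supNorm (fun k => H^[n + 1] q k - H^[n] q k - gstar) ≤
        spanSeminorm (H^[n] q - qstar)) ∧
      Tendsto (fun n : ℕ => supNorm (fun k => H^[n + 1] q k - H^[n] q k - gstar))
        atTop (nhds 0) := by
  -- key pointwise bound for any p
  have key : ∀ p : K → ℝ,
      supNorm (fun k => H p k - p k - gstar) ≤ spanSeminorm (p - qstar) := by
    intro p
    set M := univ.sup' (univ_nonempty (α := K)) (p - qstar) with hM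
    set m := univ.inf' (univ_nonempty (α := K)) (p - qstar) with hm
    set lam := (M + m) / 2 with hlam
    set p' : K → ℝ := fun k => p k - lam with hp'
    have hpeq : p = fun k => p' k + lam := by funext k; simp [hp']
    have hHp : H p = fun k => H p' k + lam := by rw [hpeq]; exact htrans p' lam
    have hbound : ∀ k, |p' k - qstar k| ≤ (M - m) / 2 := by
      intro k
      have h1 : (p - qstar) k ≤ M := Finset.le_sup' _ (mem_univ k)
      have h2 : m ≤ (p - qstar) k := Finset.inf'_le _ (mem_univ k)
      have h3 : (p - qstar) k = p k - qstar k := rfl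
      rw [h3] at h1 h2
      rw [abs_le]
      constructor <;> (simp only [hp', hlam]; linarith)
    have hsup1 : supNorm (p' - qstar) ≤ (M - m) / 2 :=
      supNorm_le' fun k => hbound k
    have hsup2 : supNorm (H p' - H qstar) ≤ (M - m) / 2 :=
      (hnonexp p' qstar).trans hsup1
    apply supNorm_le'
    intro k
    have heq : H p k - p k - gstar = (H p' - H qstar) k - (p' - qstar) k := by
      have h1 : H p k = H p' k + lam := by rw [hHp]
      have h2 : H qstar k = qstar k + gstar := by rw [hfix]
      simp [Pi.sub_apply, h1, h2, hp']; ring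
    rw [heq]
    have a1 : |(H p' - H qstar) k| ≤ (M - m) / 2 :=
      (le_supNorm' _ k).trans hsup2
    have a2 : |(p' - qstar) k| ≤ (M - m) / 2 :=
      (le_supNorm' _ k).trans hsup1
    have : spanSeminorm (p - qstar) = M - m := rfl
    rw [this]
    calc |(H p' - H qstar) k - (p' - qstar) k|
        ≤ |(H p' - H qstar) k| + |(p' - qstar) k| := abs_sub _ _
      _ ≤ M - m := by linarith
  intro q
  -- iterate of qstar
  have hiter : ∀ n : ℕ, H^[n] qstar = fun k => qstar k + n * gstar := by
    intro n
    induction n with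
    | zero => simp
    | succ n ih =>
      rw [Function.iterate_succ_apply', ih, htrans qstar (n * gstar), hfix]
      funext k; push_cast; ring
  have hspan_iter : ∀ n : ℕ,
      spanSeminorm (H^[n] q - qstar) ≤ αbar ^ n * spanSeminorm (q - qstar) := by
    intro n
    have e1 : spanSeminorm (H^[n] q - qstar) = spanSeminorm (H^[n] q - H^[n] qstar) := by
      rw [hiter n]
      have : (H^[n] q - fun k => qstar k + n * gstar)
          = fun k => (H^[n] q - qstar) k + (-(n * gstar)) := by
        funext k; simp [Pi.sub_apply]; ring
      rw [this, spanSeminorm_add_const]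
    rw [e1]
    induction n with
    | zero => simp
    | succ n ih =>
      rw [Function.iterate_succ_apply', Function.iterate_succ_apply']
      calc spanSeminorm (H (H^[n] q) - H (H^[n] qstar))
          ≤ αbar * spanSeminorm (H^[n] q - H^[n] qstar) := hspan _ _
        _ ≤ αbar * (αbar ^ n * spanSeminorm (q - qstar)) := by
            have hb := ih ?_
            · exact mul_le_mul_of_nonneg_left hb hα0
            · rw [hiter n]
              have : (H^[n] q - fun k => qstar k + n * gstar)
                  = fun k => (H^[n] q - qstar) k + (-(n * gstar)) := by
                funext k; simp [Pi.sub_apply]; ring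
              rw [this, spanSeminorm_add_const]
        _ = αbar ^ (n + 1) * spanSeminorm (q - qstar) := by ring
  have hmain : ∀ n : ℕ, supNorm (fun k => H^[n + 1] q k - H^[n] q k - gstar) ≤
      spanSeminorm (H^[n] q - qstar) := by
    intro n
    have := key (H^[n] q)
    have e : (fun k => H^[n + 1] q k - H^[n] q k - gstar)
        = fun k => H (H^[n] q) k - (H^[n] q) k - gstar := by
      funext k; rw [Function.iterate_succ_apply']
    rw [e]; exact this
  refine ⟨hmain, ?_⟩
  apply squeeze_zero (fun n => supNorm_nonneg' _)
    (fun n => (hmain n).trans (hspan_iter n))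
  have : Tendsto (fun n : ℕ => αbar ^ n) atTop (nhds 0) :=
    tendsto_pow_atTop_nhds_zero_of_lt_one hα0 hα1
  simpa using this.mul_const (spanSeminorm (q - qstar))
end
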